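/- arXiv:1702.05131 — 5 statements merged into one kernel-verified Lean document; each statement's English description precedes it below -/
import Mathlib

section
/- Let R be a commutative ring, let g ≥ 1, and let c_1 < c_2 < ⋯ < c_g be natural numbers. Suppose f_1, …, f_g ∈ R[[q]] are formal power series such that for each i the coefficient of q^{c_i} in f_i equals 1, and the coefficient of q^n in f_i equals 0 for every n ≤ c_g with n ≠ c_i. Let D := det(θ^{j−1} f_i)_{1≤i,j≤g} ∈ R[[q]] be their Wronskian. Then the coefficient of q^n in D vanishes for every n < c_1 + ⋯ + c_g, and the coefficient of q^{c_1+⋯+c_g} in D equals the Vandermonde product ∏_{1≤j<k≤g}(c_k − c_j) (a natural number, viewed in R). -/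
open Finset

/-- The operator `θ = q·d/dq` on formal power series: it multiplies the coefficient of
`q^n` by `n`. -/
noncomputable def thetaOp {R : Type*} [CommRing R] (f : PowerSeries R) : PowerSeries R :=
  PowerSeries.mk fun n => (n : R) * PowerSeries.coeff n f

lemma coeff_thetaOp_iterate {R : Type*} [CommRing R] (k n : ℕ) (f : PowerSeries R) :
    PowerSeries.coeff n (thetaOp^[k] f) = (n : R) ^ k * PowerSeries.coeff n f := by
  induction k generalizing f with
  | zero => simp
  | succ k ih =>
    rw [Function.iterate_succ_apply, ih]
    simp [thetaOp, pow_succ, mul_assoc, mul_comm, mul_left_comm]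

theorem wronskian_leading_coeff_vandermonde
    {R : Type*} [CommRing R] (g : ℕ) (hg : 1 ≤ g)
    (c : Fin g → ℕ) (hc : StrictMono c)
    (f : Fin g → PowerSeries R)
    (hdiag : ∀ i, PowerSeries.coeff (c i) (f i) = 1)
    (hoff : ∀ i, ∀ n ≤ c ⟨g - 1, by omega⟩, n ≠ c i → PowerSeries.coeff n (f i) = 0)
    (D : PowerSeries R)
    (hD : D = Matrix.det (Matrix.of fun i j : Fin g => thetaOp^[(j : ℕ)] (f i))) :
    (∀ n < ∑ i, c i, PowerSeries.coeff n D = 0) ∧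
      PowerSeries.coeff (∑ i, c i) D =
        ((∏ k, ∏ j ∈ Finset.univ.filter (fun j => j < k), (c k - c j) : ℕ) : R) := by
  subst hD
  set N := ∑ i, c i with hN
  have hcle : ∀ i, c i ≤ c ⟨g - 1, by omega⟩ := by
    intro i
    refine hc.monotone (Fin.le_def.mpr ?_)
    show (i : ℕ) ≤ g - 1
    have := i.2
    omega
  -- coefficient formula
  have hcoef : ∀ n : ℕ,
      PowerSeries.coeff n
        (Matrix.det (Matrix.of fun i j : Fin g => thetaOp^[(j : ℕ)] (f i))) =
      ∑ σ : Equiv.Perm (Fin g), (Equiv.Perm.sign σ : ℤ) •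
        ∑ l ∈ finsuppAntidiag univ n,
          ∏ i : Fin g, ((l i : R) ^ (i : ℕ) * PowerSeries.coeff (l i) (f (σ i))) := by
    intro n
    rw [Matrix.det_apply, map_sum]
    refine Finset.sum_congr rfl fun σ _ => ?_
    rw [Units.smul_def, map_zsmul, PowerSeries.coeff_prod]
    congr 1
    refine Finset.sum_congr rfl fun l _ => Finset.prod_congr rfl fun i _ => ?_
    simp [coeff_thetaOp_iterate]
  -- key vanishing lemma
  have key : ∀ (n : ℕ), n ≤ N → ∀ (σ : Equiv.Perm (Fin g)) (l : Fin g →₀ ℕ),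
      (∑ i, l i) = n → (n < N ∨ ∃ i, l i ≠ c (σ i)) →
      ∃ i, PowerSeries.coeff (l i) (f (σ i)) = 0 := by
    intro n hn σ l hl hne
    by_contra h
    push_neg at h
    have hcsum : ∑ i, c (σ i) = N := Equiv.sum_comp σ c
    have hge : ∀ i, c (σ i) ≤ l i := by
      intro i
      by_contra hlt
      push_neg at hlt
      exact h i (hoff (σ i) (l i) (le_trans hlt.le (hcle (σ i))) hlt.ne)
    have heq : ∀ i, l i = c (σ i) := by
      by_contra hne2
      push_neg at hne2
      obtain ⟨i, hi⟩ := hne2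
      have : ∑ i, c (σ i) < ∑ i, l i :=
        Finset.sum_lt_sum (fun i _ => hge i) ⟨i, Finset.mem_univ i, lt_of_le_of_ne (hge i)
          (Ne.symm hi)⟩
      omega
    have hnN : n = N := by
      rw [← hl, ← hcsum]
      exact Finset.sum_congr rfl fun i _ => heq i
    rcases hne with h1 | ⟨i, hi⟩
    · omega
    · exact hi (heq i)
  have hsum_of_mem : ∀ {n : ℕ} {l : Fin g →₀ ℕ}, l ∈ finsuppAntidiag (univ : Finset (Fin g)) n →
      ∑ i, l i = n := by
    intro n l hl
    exact ((Finset.mem_finsuppAntidiag).mp hl).1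
  constructor
  · -- vanishing part
    intro n hnlt
    rw [hcoef]
    refine Finset.sum_eq_zero fun σ _ => ?_
    rw [smul_eq_zero_of_right]
    refine Finset.sum_eq_zero fun l hl => ?_
    obtain ⟨i, hi⟩ := key n hnlt.le σ l (hsum_of_mem hl) (Or.inl hnlt)
    exact Finset.prod_eq_zero (Finset.mem_univ i) (by rw [hi, mul_zero])
  · -- leading coefficient
    rw [hcoef]
    have hstep : ∀ σ : Equiv.Perm (Fin g),
        (∑ l ∈ finsuppAntidiag univ N,
          ∏ i : Fin g, ((l i : R) ^ (i : ℕ) * PowerSeries.coeff (l i) (f (σ i)))) =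
        ∏ i : Fin g, ((c (σ i) : R) ^ (i : ℕ)) := by
      intro σ
      have hcsum : ∑ i, c (σ i) = N := Equiv.sum_comp σ c
      set l₀ : Fin g →₀ ℕ := Finsupp.equivFunOnFinite.symm (fun i => c (σ i)) with hl₀
      have hl₀app : ∀ i, l₀ i = c (σ i) := fun i => rfl
      have hmem : l₀ ∈ finsuppAntidiag (univ : Finset (Fin g)) N := by
        rw [Finset.mem_finsuppAntidiag]
        exact ⟨by simpa [hl₀app] using hcsum, Finset.subset_univ _⟩
      rw [Finset.sum_eq_single_of_mem l₀ hmem]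
      · refine Finset.prod_congr rfl fun i _ => ?_
        rw [hl₀app, hdiag (σ i), mul_one]
      · intro l hl hlne
        have : ∃ i, l i ≠ c (σ i) := by
          by_contra hall
          push_neg at hall
          exact hlne (Finsupp.ext fun i => (hall i).trans (hl₀app i).symm)
        obtain ⟨i, hi⟩ := key N le_rfl σ l (hsum_of_mem hl) (Or.inr this)
        exact Finset.prod_eq_zero (Finset.mem_univ i) (by rw [hi, mul_zero])
    rw [Finset.sum_congr rfl fun σ _ => by rw [hstep σ]]
    have hvdm : (∑ σ : Equiv.Perm (Fin g), (Equiv.Perm.sign σ : ℤ) •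
        ∏ i : Fin g, ((c (σ i) : R) ^ (i : ℕ))) =
        Matrix.det (Matrix.vandermonde (fun i : Fin g => (c i : R))) := by
      rw [Matrix.det_apply]
      refine Finset.sum_congr rfl fun σ _ => ?_
      rw [Units.smul_def]
      congr 1
    rw [hvdm, Matrix.det_vandermonde]
    push_cast
    rw [Finset.prod_comm' (t' := (univ : Finset (Fin g)))
      (s' := fun k => Finset.univ.filter (fun j => j < k))
      (by intro x y; simp [Finset.mem_Ioi])]
    refine Finset.prod_congr rfl fun k _ => Finset.prod_congr rfl fun j hj => ?_
    rw [Nat.cast_sub (le_of_lt (hc (Finset.mem_filter.mp hj).2))]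
end

section
/- Let g ≥ 1, let f_1, …, f_g : ℍ → ℂ be holomorphic functions on the complex upper half-plane, and let γ ∈ GL₂⁺(ℝ) be a matrix with positive determinant such that f_i ∣[2] γ = f_i for every i. Let W : ℍ → ℂ be the Wronskian W(τ) := det((d/dτ)^{j−1} f_i(τ))_{1≤i,j≤g}. Then W ∣[g(g+1)] γ = (det γ)^{g(g+1)/2 − 1} · W. -/
open UpperHalfPlane ModularForm Matrix
open scoped MatrixGroups ModularForm Manifold

set_option synthInstance.maxHeartbeats 400000
set_option maxHeartbeats 800000

namespace WrAux

noncomputable def dd (γ : GL(2, ℝ)⁺) : ℂ := (((γ : GL (Fin 2) ℝ) : Matrix (Fin 2) (Fin 2) ℝ).det : ℝ)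
noncomputable def δf (γ : GL(2, ℝ)⁺) : ℂ → ℂ := fun z => ((γ : GL (Fin 2) ℝ) 1 0 : ℝ) * z + ((γ : GL (Fin 2) ℝ) 1 1 : ℝ)
noncomputable def φf (γ : GL(2, ℝ)⁺) : ℂ → ℂ :=
  fun z => (((γ : GL (Fin 2) ℝ) 0 0 : ℝ) * z + ((γ : GL (Fin 2) ℝ) 0 1 : ℝ)) / δf γ z
def S : Set ℂ := {z : ℂ | 0 < z.im}

lemma hS : IsOpen S := Complex.continuous_im.isOpen_preimage _ isOpen_Ioi
lemma δ_coe (γ : GL(2, ℝ)⁺) (τ : ℍ) : δf γ ↑τ = denom γ τ := rfl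
lemma δ_ne (γ : GL(2, ℝ)⁺) {z : ℂ} (hz : z ∈ S) : δf γ z ≠ 0 :=
  denom_ne_zero γ (UpperHalfPlane.mk z hz)
lemma dd_ne (γ : GL(2, ℝ)⁺) : dd γ ≠ 0 := by
  simp only [dd, ne_eq, Complex.ofReal_eq_zero]
  exact (Matrix.GLPos.det_ne_zero γ)
lemma det_pos (γ : GL(2, ℝ)⁺) : 0 < (γ : GL (Fin 2) ℝ).det.val :=
  (Matrix.mem_glpos _).mp γ.2
lemma σ_pos (γ : GL(2, ℝ)⁺) (z : ℂ) : σ (γ : GL (Fin 2) ℝ) z = z := by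
  simp only [σ]
  rw [if_pos (by simpa using det_pos γ)]
  rfl
lemma slash_pos (γ : GL(2, ℝ)⁺) (f : ℍ → ℂ) (k : ℤ) (τ : ℍ) :
    (f ∣[k] (γ : GL (Fin 2) ℝ)) τ = f (γ • τ) * dd γ ^ (k - 1) * denom γ τ ^ (-k) := by
  rw [ModularForm.slash_apply, σ_pos, abs_of_pos (det_pos γ), dd,
    Matrix.GeneralLinearGroup.val_det_apply]
  rfl
lemma φ_coe (γ : GL(2, ℝ)⁺) (τ : ℍ) : φf γ ↑τ = ↑(γ • τ) := by
  rw [show γ • τ = (γ : GL (Fin 2) ℝ) • τ from rfl, coe_smul_of_det_pos (det_pos γ)]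
  rfl
lemma φ_mem (γ : GL(2, ℝ)⁺) {z : ℂ} (hz : z ∈ S) : φf γ z ∈ S := by
  have := (γ • (UpperHalfPlane.mk z hz)).im_pos
  show 0 < (φf γ (UpperHalfPlane.mk z hz : ℂ)).im
  rw [φ_coe]
  exact this
lemma hasDerivAt_φ (γ : GL(2, ℝ)⁺) {z : ℂ} (hz : z ∈ S) :
    HasDerivAt (φf γ) (dd γ / δf γ z ^ 2) z := by
  have h1 : HasDerivAt (fun z : ℂ => (((γ : GL (Fin 2) ℝ) 0 0 : ℝ) : ℂ) * z + (((γ : GL (Fin 2) ℝ) 0 1 : ℝ) : ℂ))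
      (((γ : GL (Fin 2) ℝ) 0 0 : ℝ) : ℂ) z := by
    simpa using ((hasDerivAt_id z).const_mul ((((γ : GL (Fin 2) ℝ) 0 0 : ℝ)) : ℂ)).add_const (((γ : GL (Fin 2) ℝ) 0 1 : ℝ) : ℂ)
  have h2 : HasDerivAt (fun z : ℂ => (((γ : GL (Fin 2) ℝ) 1 0 : ℝ) : ℂ) * z + (((γ : GL (Fin 2) ℝ) 1 1 : ℝ) : ℂ))
      (((γ : GL (Fin 2) ℝ) 1 0 : ℝ) : ℂ) z := by
    simpa using ((hasDerivAt_id z).const_mul ((((γ : GL (Fin 2) ℝ) 1 0 : ℝ)) : ℂ)).add_const (((γ : GL (Fin 2) ℝ) 1 1 : ℝ) : ℂ)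
  have := h1.div h2 (δ_ne γ hz)
  refine HasDerivAt.congr_deriv this ?_
  rw [dd, Matrix.det_fin_two]
  simp only [δf]
  push_cast
  ring



/-- `1/φ'` as a function. -/
noncomputable def q (γ : GL(2, ℝ)⁺) : ℂ → ℂ := fun z => δf γ z ^ 2 / dd γ

lemma q_analytic (γ : GL(2, ℝ)⁺) : AnalyticOnNhd ℂ (q γ) S := by
  apply DifferentiableOn.analyticOnNhd _ hS
  apply Differentiable.differentiableOn
  apply Differentiable.div_const
  apply Differentiable.pow
  exact (differentiable_const _ |>.mul differentiable_id).add_const _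

lemma δ_analytic (γ : GL(2, ℝ)⁺) : AnalyticOnNhd ℂ (δf γ) S := by
  apply DifferentiableOn.analyticOnNhd _ hS
  exact ((differentiable_const _ |>.mul differentiable_id).add_const _).differentiableOn

lemma deriv_zero_fun (z : ℂ) : deriv (0 : ℂ → ℂ) z = 0 := deriv_const z 0

/-- Coefficients relating derivatives at `φ z` to derivatives at `z`. -/
noncomputable def coef (γ : GL(2, ℝ)⁺) : ℕ → ℕ → ℂ → ℂ
  | 0 => fun m z => if m = 0 then q γ z else 0
  | (n+1) => fun m z =>
      q γ z * (deriv (coef γ n m) z + if m = 0 then 0 else coef γ n (m-1) z)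

lemma coef_zero_of_lt (γ : GL(2, ℝ)⁺) : ∀ n m : ℕ, n < m → coef γ n m = 0 := by
  intro n
  induction n with
  | zero =>
    intro m hm
    funext z
    simp only [coef, if_neg (by omega : m ≠ 0)]
    rfl
  | succ n ih =>
    intro m hm
    funext z
    have h1 : coef γ n m = 0 := ih m (by omega)
    have h2 : m ≠ 0 := by omega
    have h3 : coef γ n (m-1) = 0 := ih (m-1) (by omega)
    simp only [coef, h1, if_neg h2, h3]
    rw [deriv_zero_fun z, Pi.zero_apply]
    simp

lemma coef_analytic (γ : GL(2, ℝ)⁺) : ∀ n m : ℕ, AnalyticOnNhd ℂ (coef γ n m) S := by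
  intro n
  induction n with
  | zero =>
    intro m
    rcases m with _ | m
    · simpa [coef] using q_analytic γ
    · simp only [coef]
      exact (analyticOnNhd_const (v := (0:ℂ)))
  | succ n ih =>
    intro m
    rcases m with _ | m
    · simp only [coef]
      exact (q_analytic γ).mul (((ih 0).deriv_of_isOpen hS).add analyticOnNhd_const)
    · simp only [coef]
      refine (q_analytic γ).mul ?_
      have := ((ih (m+1)).deriv_of_isOpen hS).add (ih m)
      exact this

lemma coef_diag (γ : GL(2, ℝ)⁺) : ∀ n : ℕ, ∀ z : ℂ, coef γ n n z = q γ z ^ (n + 1) := by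
  intro n
  induction n with
  | zero => intro z; simp [coef]
  | succ n ih =>
    intro z
    have h0 : coef γ n (n+1) = 0 := coef_zero_of_lt γ n (n+1) (by omega)
    simp only [coef, h0, Nat.add_sub_cancel]
    rw [if_neg (Nat.succ_ne_zero n)]
    rw [deriv_zero_fun z, zero_add, ih]
    ring


lemma iter_analytic {F : ℂ → ℂ} (hF : AnalyticOnNhd ℂ F S) (n : ℕ) :
    AnalyticOnNhd ℂ (iteratedDeriv n F) S := by
  induction n with
  | zero => simpa using hF
  | succ n ih => rw [iteratedDeriv_succ]; exact ih.deriv_of_isOpen hS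

/-- The key identity expressing derivatives of `F` at `φ z` in terms of derivatives at `z`. -/
lemma key (γ : GL(2, ℝ)⁺) {F : ℂ → ℂ} (hF : AnalyticOnNhd ℂ F S)
    (heq : ∀ z ∈ S, F (φf γ z) = q γ z * F z) :
    ∀ n : ℕ, ∀ z ∈ S, iteratedDeriv n F (φf γ z) =
      ∑ m ∈ Finset.range (n+1), coef γ n m z * iteratedDeriv m F z := by
  intro n
  induction n with
  | zero =>
    intro z hz
    simpa [coef] using heq z hz
  | succ n ih =>
    intro z hz
    -- derivative of LHS
    have hφ := hasDerivAt_φ γ hz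
    have hdφ : dd γ / δf γ z ^ 2 ≠ 0 :=
      div_ne_zero (dd_ne γ) (pow_ne_zero _ (δ_ne γ hz))
    have hL : HasDerivAt (fun w => iteratedDeriv n F (φf γ w))
        (iteratedDeriv (n+1) F (φf γ z) * (dd γ / δf γ z ^ 2)) z := by
      have h1 : HasDerivAt (iteratedDeriv n F) (iteratedDeriv (n+1) F (φf γ z)) (φf γ z) := by
        have := (iter_analytic hF n (φf γ z) (φ_mem γ hz)).differentiableAt.hasDerivAt
        rwa [← iteratedDeriv_succ] at this
      exact HasDerivAt.comp z h1 hφ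
    have hR : HasDerivAt (fun w => ∑ m ∈ Finset.range (n+1), coef γ n m w * iteratedDeriv m F w)
        (∑ m ∈ Finset.range (n+1),
          (deriv (coef γ n m) z * iteratedDeriv m F z +
            coef γ n m z * iteratedDeriv (m+1) F z)) z := by
      apply HasDerivAt.fun_sum
      intro m _
      have hc : HasDerivAt (coef γ n m) (deriv (coef γ n m) z) z :=
        (coef_analytic γ n m z hz).differentiableAt.hasDerivAt
      have hf' : HasDerivAt (iteratedDeriv m F) (iteratedDeriv (m+1) F z) z := by
        have := (iter_analytic hF m z hz).differentiableAt.hasDerivAt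
        rwa [← iteratedDeriv_succ] at this
      exact hc.mul hf'
    have hEq : (fun w => iteratedDeriv n F (φf γ w)) =ᶠ[nhds z]
        (fun w => ∑ m ∈ Finset.range (n+1), coef γ n m w * iteratedDeriv m F w) := by
      filter_upwards [hS.mem_nhds hz] with w hw
      exact ih w hw
    have hders : iteratedDeriv (n+1) F (φf γ z) * (dd γ / δf γ z ^ 2) =
        ∑ m ∈ Finset.range (n+1),
          (deriv (coef γ n m) z * iteratedDeriv m F z +
            coef γ n m z * iteratedDeriv (m+1) F z) := by
      rw [← hL.deriv, ← hR.deriv]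
      exact hEq.deriv_eq
    -- now compute the RHS of the goal
    have hqz : q γ z * (dd γ / δf γ z ^ 2) = 1 := by
      rw [q, div_mul_div_comm, mul_comm (dd γ)]
      exact div_self (mul_ne_zero (pow_ne_zero _ (δ_ne γ hz)) (dd_ne γ))
    have hgoal : ∑ m ∈ Finset.range (n+2), coef γ (n+1) m z * iteratedDeriv m F z =
        q γ z * ∑ m ∈ Finset.range (n+1),
          (deriv (coef γ n m) z * iteratedDeriv m F z +
            coef γ n m z * iteratedDeriv (m+1) F z) := by
      have hsplit : ∀ m ∈ Finset.range (n+2), coef γ (n+1) m z * iteratedDeriv m F z =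
          q γ z * (deriv (coef γ n m) z * iteratedDeriv m F z) +
          q γ z * ((if m = 0 then 0 else coef γ n (m-1) z) * iteratedDeriv m F z) := by
        intro m _
        simp only [coef]
        ring
      rw [Finset.sum_congr rfl hsplit, Finset.sum_add_distrib]
      have hS1 : ∑ m ∈ Finset.range (n+2),
          q γ z * (deriv (coef γ n m) z * iteratedDeriv m F z) =
          ∑ m ∈ Finset.range (n+1),
            q γ z * (deriv (coef γ n m) z * iteratedDeriv m F z) := by
        rw [Finset.sum_range_succ,
          show coef γ n (n+1) = 0 from coef_zero_of_lt γ n (n+1) (by omega), deriv_zero_fun]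
        simp
      have hS2 : ∑ m ∈ Finset.range (n+2),
          q γ z * ((if m = 0 then 0 else coef γ n (m-1) z) * iteratedDeriv m F z) =
          ∑ m ∈ Finset.range (n+1),
            q γ z * (coef γ n m z * iteratedDeriv (m+1) F z) := by
        rw [Finset.sum_range_succ' (fun m =>
          q γ z * ((if m = 0 then 0 else coef γ n (m-1) z) * iteratedDeriv m F z)) (n+1)]
        simp
      rw [hS1, hS2, Finset.mul_sum]
      rw [← Finset.sum_add_distrib]
      exact Finset.sum_congr rfl (fun m _ => by ring)
    rw [hgoal, ← hders, ← mul_assoc, mul_comm (q γ z), mul_assoc, hqz, mul_one]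


lemma det_step (γ : GL(2, ℝ)⁺) {g : ℕ} (F : Fin g → ℂ → ℂ)
    (hF : ∀ i, AnalyticOnNhd ℂ (F i) S)
    (heq : ∀ i, ∀ z ∈ S, F i (φf γ z) = q γ z * F i z) {z : ℂ} (hz : z ∈ S) :
    Matrix.det (Matrix.of fun i j : Fin g => iteratedDeriv (j : ℕ) (F i) (φf γ z)) =
      (∏ n ∈ Finset.range g, q γ z ^ (n+1)) *
        Matrix.det (Matrix.of fun i j : Fin g => iteratedDeriv (j : ℕ) (F i) z) := by
  classical
  set C : Matrix (Fin g) (Fin g) ℂ := Matrix.of fun n m : Fin g => coef γ (n : ℕ) (m : ℕ) z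
    with hC
  set A : Matrix (Fin g) (Fin g) ℂ :=
    Matrix.of fun i m : Fin g => iteratedDeriv (m : ℕ) (F i) z with hA
  have hmat : (Matrix.of fun i j : Fin g => iteratedDeriv (j : ℕ) (F i) (φf γ z)) = A * Cᵀ := by
    ext i n
    simp only [Matrix.mul_apply, Matrix.transpose_apply, Matrix.of_apply, hA, hC]
    rw [key γ (hF i) (heq i) (n : ℕ) z hz]
    have hsum : ∑ m ∈ Finset.range ((n : ℕ) + 1), coef γ (n : ℕ) m z * iteratedDeriv m (F i) z
        = ∑ m ∈ Finset.range g, coef γ (n : ℕ) m z * iteratedDeriv m (F i) z := by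
      apply Finset.sum_subset
      · intro m hm
        simp only [Finset.mem_range] at hm ⊢
        have := n.isLt
        omega
      · intro m _ hm
        simp only [Finset.mem_range, not_lt] at hm
        rw [show coef γ (n : ℕ) m = 0 from coef_zero_of_lt γ _ _ (by omega)]
        simp
    rw [hsum, Fin.sum_univ_eq_sum_range
      (fun m => iteratedDeriv m (F i) z * coef γ (n : ℕ) m z) g]
    exact Finset.sum_congr rfl fun m _ => mul_comm _ _
  have hCdet : C.det = ∏ n ∈ Finset.range g, q γ z ^ (n+1) := by
    have htri : C.BlockTriangular OrderDual.toDual := by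
      intro a b hab
      simp only [hC, Matrix.of_apply]
      rw [show coef γ (a : ℕ) (b : ℕ) = 0 from
        coef_zero_of_lt γ _ _ (by exact_mod_cast hab)]
      rfl
    rw [Matrix.det_of_lowerTriangular C htri]
    rw [← Fin.prod_univ_eq_prod_range (fun n => q γ z ^ (n+1)) g]
    exact Finset.prod_congr rfl fun n _ => by simp [hC, coef_diag γ (n : ℕ) z]
  rw [hmat, Matrix.det_mul, Matrix.det_transpose, hCdet, mul_comm]

lemma funceq (γ : GL(2, ℝ)⁺) (f : ℍ → ℂ) (hinv : f ∣[(2 : ℤ)] (γ : GL (Fin 2) ℝ) = f) :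
    ∀ z ∈ S, (f ∘ ofComplex) (φf γ z) = q γ z * ((f ∘ ofComplex) z) := by
  intro z hz
  set τ : ℍ := UpperHalfPlane.mk z hz with hτ
  have h := congrFun hinv τ
  rw [slash_pos] at h
  have hd : denom γ τ ≠ 0 := denom_ne_zero γ τ
  have hD : dd γ ≠ 0 := dd_ne γ
  have hq : q γ z = denom γ τ ^ 2 / dd γ := rfl
  have h2 : f (γ • τ) = f τ * denom γ τ ^ 2 / dd γ := by
    rw [show ((2:ℤ) - 1) = 1 by norm_num, zpow_one] at h
    rw [show ((-2 : ℤ)) = -(2:ℕ) by norm_num, _root_.zpow_neg, zpow_natCast] at h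
    rw [eq_div_iff hD]
    field_simp [dd] at h
    exact h.trans (mul_comm _ _)
  calc (f ∘ ofComplex) (φf γ z) = f (ofComplex (φf γ z)) := rfl
    _ = f (γ • τ) := by rw [show φf γ z = ↑(γ • τ) from φ_coe γ τ, ofComplex_apply]
    _ = f τ * denom γ τ ^ 2 / dd γ := h2
    _ = q γ z * ((f ∘ ofComplex) z) := by
        rw [hq, Function.comp_apply, show ofComplex z = τ from ofComplex_apply_of_im_pos hz]
        ring

lemma pow_aux (d D : ℂ) (hd : d ≠ 0) (hD : D ≠ 0) (e : ℕ) :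
    (d ^ 2 / D) ^ e * D ^ ((2 * e : ℤ) - 1) * d ^ (-(2 * e : ℤ)) = D ^ ((e : ℤ) - 1) := by
  rw [div_pow, ← pow_mul]
  rw [show ((2 * e : ℤ)) = ((2 * e : ℕ) : ℤ) by push_cast; ring]
  rw [_root_.zpow_neg, zpow_natCast, zpow_sub₀ hD, zpow_sub₀ hD, zpow_natCast,
    show ((e : ℤ)) = ((e : ℕ) : ℤ) from rfl, zpow_natCast]
  field_simp
  ring


lemma sum_aux (g : ℕ) : 2 * (∑ n ∈ Finset.range g, (n + 1)) = g * (g + 1) := by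
  induction g with
  | zero => simp
  | succ g ih => rw [Finset.sum_range_succ, Nat.mul_add, ih]; ring

end WrAux

open WrAux

/-- The Wronskian of a family of functions on the upper half-plane, with complex
derivatives taken via the local inverse `ofComplex` of the inclusion `ℍ ↪ ℂ`. -/
noncomputable def wronskianH {g : ℕ} (f : Fin g → (ℍ → ℂ)) : ℍ → ℂ :=
  fun τ => Matrix.det (Matrix.of fun i j : Fin g =>
    iteratedDeriv (j : ℕ) ((f i) ∘ UpperHalfPlane.ofComplex) (τ : ℂ))

theorem wronskian_slash_weight_two_invariant
    (g : ℕ) (hg : 1 ≤ g) (f : Fin g → (ℍ → ℂ))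
    (hol : ∀ i, MDifferentiable 𝓘(ℂ) 𝓘(ℂ) (f i))
    (γ : GL(2, ℝ)⁺) (hinv : ∀ i, (f i) ∣[(2 : ℤ)] (γ : GL (Fin 2) ℝ) = f i) :
    wronskianH f ∣[(g * (g + 1) : ℤ)] (γ : GL (Fin 2) ℝ) =
      fun τ => ((((γ : GL (Fin 2) ℝ) : Matrix (Fin 2) (Fin 2) ℝ).det : ℂ) ^
          ((g * (g + 1) / 2 : ℕ) - 1 : ℤ)) * wronskianH f τ := by
  funext τ
  set e : ℕ := ∑ n ∈ Finset.range g, (n + 1) with he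
  have he2 : 2 * e = g * (g + 1) := sum_aux g
  have hτS : (τ : ℂ) ∈ S := τ.2
  set F : Fin g → ℂ → ℂ := fun i => (f i) ∘ ofComplex with hFdef
  have hF : ∀ i, AnalyticOnNhd ℂ (F i) S :=
    fun i => (UpperHalfPlane.mdifferentiable_iff.mp (hol i)).analyticOnNhd hS
  have heq : ∀ i, ∀ z ∈ S, F i (φf γ z) = q γ z * F i z :=
    fun i => funceq γ (f i) (hinv i)
  rw [slash_pos]
  have hW : wronskianH f (γ • τ) = q γ (↑τ) ^ e * wronskianH f τ := by
    have h1 : wronskianH f (γ • τ) =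
        Matrix.det (Matrix.of fun i j : Fin g => iteratedDeriv (j : ℕ) (F i) (φf γ ↑τ)) := by
      rw [wronskianH, show φf γ (↑τ : ℂ) = ↑(γ • τ) from φ_coe γ τ]
    rw [h1, det_step γ F hF heq hτS, Finset.prod_pow_eq_pow_sum, ← he]
    rfl
  rw [hW]
  have hd : denom γ τ ≠ 0 := denom_ne_zero γ τ
  have hq : q γ (↑τ : ℂ) = denom γ τ ^ 2 / dd γ := rfl
  have hk : (g * (g + 1) : ℤ) = 2 * (e : ℤ) := by exact_mod_cast he2.symm
  have hnat : g * (g + 1) / 2 = e := by rw [← he2]; omega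
  show (q γ ↑τ ^ e * wronskianH f τ) * dd γ ^ ((g * (g + 1) : ℤ) - 1) *
      denom γ τ ^ (-(g * (g + 1) : ℤ)) =
    dd γ ^ (((g * (g + 1) / 2 : ℕ) : ℤ) - 1) * wronskianH f τ
  rw [hq, hk, hnat]
  linear_combination wronskianH f τ * pow_aux (denom γ τ) (dd γ) hd (dd_ne γ) e
end

section
/- Let p be a prime and let f_1, …, f_g be cusp forms of weight 2 on Γ0(p), each invariant under the Atkin–Lehner involution in the sense that f_i ∣[2] A = f_i, where A = (0 −1; p 0) ∈ GL₂⁺(ℝ). Let W_p : ℍ → ℂ be the Wronskian W_p(τ) := det((d/dτ)^{j−1} f_i(τ))_{1≤i,j≤g}. Then W_p ∣[g(g+1)] A = p^{g(g+1)/2 − 1} · W_p. (Equivalently, with the classical normalization of the slash operator using (det γ)^{k/2}, the Wronskian W_p is invariant under the Atkin–Lehner involution w_p in weight g(g+1).) -/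
open UpperHalfPlane ModularForm Matrix CongruenceSubgroup
open scoped MatrixGroups ModularForm Manifold

set_option maxHeartbeats 1000000
set_option synthInstance.maxHeartbeats 400000

private lemma deriv_zero_fun (w : ℂ) : deriv (0 : ℂ → ℂ) w = 0 := by
  have : (0 : ℂ → ℂ) = fun _ => (0 : ℂ) := rfl
  rw [this, deriv_const]

private lemma analyticOnNhd_iteratedDeriv {f : ℂ → ℂ} {s : Set ℂ}
    (h : AnalyticOnNhd ℂ f s) (n : ℕ) : AnalyticOnNhd ℂ (iteratedDeriv n f) s := by
  induction n with
  | zero => simpa [iteratedDeriv_zero] using h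
  | succ n ih => rw [iteratedDeriv_succ]; exact ih.deriv

/-- Key triangular expansion: the iterated derivatives of `h · (f ∘ γ)` are triangular
combinations of the iterated derivatives of `f` at `γ w`, with "diagonal" coefficient
`h w * (deriv γ w) ^ j`. -/
private lemma key_expansion {s t : Set ℂ} (hs : IsOpen s)
    {γ h : ℂ → ℂ} (hγ : AnalyticOnNhd ℂ γ s) (hh : AnalyticOnNhd ℂ h s)
    (hmaps : Set.MapsTo γ s t) (j : ℕ) :
    ∃ c : ℕ → ℂ → ℂ, (∀ m, AnalyticOnNhd ℂ (c m) s) ∧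
      (∀ m, j < m → c m = 0) ∧
      (∀ w ∈ s, c j w = h w * (deriv γ w) ^ j) ∧
      (∀ f : ℂ → ℂ, AnalyticOnNhd ℂ f t → ∀ w ∈ s,
        iteratedDeriv j (fun x => h x * f (γ x)) w =
          ∑ m ∈ Finset.range (j + 1), c m w * iteratedDeriv m f (γ w)) := by
  induction j with
  | zero =>
      refine ⟨fun m => if m = 0 then h else 0, fun m => ?_, fun m hm => ?_,
        fun w hw => ?_, fun f hf w hw => ?_⟩
      · by_cases hm : m = 0
        · simpa [hm] using hh
        · simp only [hm, ↓reduceIte]; exact fun x _ => analyticAt_const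
      · have : m ≠ 0 := by omega
        simp [this]
      · simp
      · simp
  | succ j ih =>
      obtain ⟨c, hcan, hcvan, hcdiag, hcsum⟩ := ih
      refine ⟨fun m w => deriv (c m) w + (if m = 0 then 0 else c (m - 1) w) * deriv γ w,
        fun m => ?_, fun m hm => ?_, fun w hw => ?_, fun f hf w hw => ?_⟩
      · apply ((hcan m).deriv).add
        rcases Nat.eq_zero_or_pos m with rfl | hm
        · have : (fun w => (if (0:ℕ) = 0 then (0:ℂ) else c (0 - 1) w) * deriv γ w)
              = fun _ => (0:ℂ) := by funext w; simp
        
          rw [this]; exact fun x hx => analyticAt_const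
        · have hm0 : m ≠ 0 := hm.ne'
          have : (fun w => (if m = 0 then (0:ℂ) else c (m - 1) w) * deriv γ w)
              = fun w => c (m - 1) w * deriv γ w := by funext w; simp [hm0]
          rw [this]; exact (hcan (m - 1)).mul hγ.deriv
      · have h1 : c m = 0 := hcvan m (by omega)
        have h2 : c (m - 1) = 0 := hcvan (m - 1) (by omega)
        have hm0 : m ≠ 0 := by omega
        funext w
        simp [h1, h2, hm0, deriv_zero_fun]
      · have h1 : c (j + 1) = 0 := hcvan (j + 1) (lt_add_one j)
        simp only [h1, Nat.succ_ne_zero, if_neg, Nat.add_sub_cancel, deriv_zero_fun]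
        rw [hcdiag w hw]
        simp [pow_succ, deriv_zero_fun]
        ring
      · rw [iteratedDeriv_succ]
        have hev : iteratedDeriv j (fun x => h x * f (γ x)) =ᶠ[nhds w]
            fun x => ∑ m ∈ Finset.range (j + 1), c m x * iteratedDeriv m f (γ x) :=
          Filter.eventuallyEq_of_mem (hs.mem_nhds hw) (fun x hx => hcsum f hf x hx)
        rw [hev.deriv_eq]
        have hdiffF : ∀ m, DifferentiableAt ℂ (fun x => iteratedDeriv m f (γ x)) w := fun m =>
          (((analyticOnNhd_iteratedDeriv hf m) (γ w) (hmaps hw)).comp (hγ w hw)).differentiableAt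
        rw [deriv_fun_sum (A := fun m x => c m x * iteratedDeriv m f (γ x)) (fun m _ => ((hcan m w hw).differentiableAt.mul (hdiffF m)))]
        have hterm : ∀ m ∈ Finset.range (j + 1),
            deriv (fun x => c m x * iteratedDeriv m f (γ x)) w
              = deriv (c m) w * iteratedDeriv m f (γ w)
                + c m w * (iteratedDeriv (m + 1) f (γ w) * deriv γ w) := by
          intro m _
          rw [deriv_fun_mul ((hcan m w hw).differentiableAt) (hdiffF m)]
          congr 1
          congr 1
          have hcomp : deriv (fun x => iteratedDeriv m f (γ x)) w
              = deriv (iteratedDeriv m f) (γ w) * deriv γ w := by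
            rw [← Function.comp_def]
            exact deriv_comp w
              ((analyticOnNhd_iteratedDeriv hf m) (γ w) (hmaps hw)).differentiableAt
              (hγ w hw).differentiableAt
          rw [hcomp, ← iteratedDeriv_succ]
        rw [Finset.sum_congr rfl hterm, Finset.sum_add_distrib]
        have hsplit : ∑ m ∈ Finset.range (j + 1 + 1),
            (deriv (c m) w + (if m = 0 then 0 else c (m - 1) w) * deriv γ w)
              * iteratedDeriv m f (γ w)
          = (∑ m ∈ Finset.range (j + 1 + 1), deriv (c m) w * iteratedDeriv m f (γ w))
            + ∑ m ∈ Finset.range (j + 1 + 1),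
                (if m = 0 then 0 else c (m - 1) w) * deriv γ w * iteratedDeriv m f (γ w) := by
          rw [← Finset.sum_add_distrib]
          exact Finset.sum_congr rfl fun m _ => by ring
        rw [hsplit]
        congr 1
        · conv_rhs => rw [Finset.sum_range_succ]
          have h1 : c (j + 1) = 0 := hcvan (j + 1) (lt_add_one j)
          simp [h1, deriv_zero_fun]
        · conv_rhs => rw [Finset.sum_range_succ']
          have h0 : (if (0:ℕ) = 0 then (0:ℂ) else c (0-1) w) * deriv γ w * iteratedDeriv 0 f (γ w) = 0 := by
            simp
          rw [h0, add_zero]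
          refine Finset.sum_congr rfl fun m _ => ?_
          simp only [Nat.succ_ne_zero, Nat.add_sub_cancel, if_false]
          ring

/-- Determinant transformation under the triangular expansion. -/
private lemma det_transform {g : ℕ} {s t : Set ℂ} (hs : IsOpen s)
    {γ h : ℂ → ℂ} (hγ : AnalyticOnNhd ℂ γ s) (hh : AnalyticOnNhd ℂ h s)
    (hmaps : Set.MapsTo γ s t) {z : ℂ} (hz : z ∈ s)
    (F : Fin g → ℂ → ℂ) (hF : ∀ i, AnalyticOnNhd ℂ (F i) t) :
    Matrix.det (Matrix.of fun i j : Fin g =>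
        iteratedDeriv (j : ℕ) (fun x => h x * F i (γ x)) z)
      = Matrix.det (Matrix.of fun i j : Fin g => iteratedDeriv (j : ℕ) (F i) (γ z))
        * ∏ j : Fin g, (h z * (deriv γ z) ^ (j : ℕ)) := by
  choose c hcan hcvan hcdiag hcsum using fun j : Fin g =>
    key_expansion hs hγ hh hmaps (j : ℕ)
  have hmatrix : (Matrix.of fun i j : Fin g =>
      iteratedDeriv (j : ℕ) (fun x => h x * F i (γ x)) z)
    = (Matrix.of fun i j : Fin g => iteratedDeriv (j : ℕ) (F i) (γ z))
      * (Matrix.of fun m j : Fin g => c j m z) := by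
    ext i j
    rw [Matrix.mul_apply]
    simp only [Matrix.of_apply]
    rw [hcsum j (F i) (hF i) z hz]
    have hext : ∑ m ∈ Finset.range ((j : ℕ) + 1), c j m z * iteratedDeriv m (F i) (γ z)
        = ∑ m ∈ Finset.range g, c j m z * iteratedDeriv m (F i) (γ z) := by
      refine Finset.sum_subset ?_ ?_
      · exact Finset.range_subset_range.mpr j.2
      · intro m _ hm
        have : (j : ℕ) < m := by
          simp only [Finset.mem_range, not_lt] at hm
          omega
        rw [hcvan j m this]
        simp
    rw [hext, ← Fin.sum_univ_eq_sum_range (fun m => c j m z * iteratedDeriv m (F i) (γ z)) g]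
    exact Finset.sum_congr rfl fun m _ => mul_comm _ _
  rw [hmatrix, Matrix.det_mul]
  congr 1
  have htri : (Matrix.of fun m j : Fin g => c j m z).BlockTriangular id := by
    intro m j hmj
    simp only [Matrix.of_apply]
    rw [hcvan j m hmj]
    rfl
  rw [Matrix.det_of_upperTriangular htri]
  exact Finset.prod_congr rfl fun j _ => hcdiag j z hz

theorem wronskian_atkin_lehner_invariant
    (p : ℕ) (hp : p.Prime) (g : ℕ) (hg : 1 ≤ g)
    (f : Fin g → CuspForm (Gamma0 p) 2)
    (A : GL(2, ℝ)⁺)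
    (hA : ((A : GL (Fin 2) ℝ) : Matrix (Fin 2) (Fin 2) ℝ) = !![0, -1; (p : ℝ), 0])
    (hinv : ∀ i, ((f i : ℍ → ℂ)) ∣[(2 : ℤ)] (A : GL (Fin 2) ℝ) = (f i : ℍ → ℂ)) :
    wronskianH (fun i => (f i : ℍ → ℂ)) ∣[(g * (g + 1) : ℤ)] (A : GL (Fin 2) ℝ) =
      fun τ => ((p : ℂ) ^ ((g * (g + 1) / 2 : ℕ) - 1 : ℤ)) *
        wronskianH (fun i => (f i : ℍ → ℂ)) τ := by
  have hp0 : (p : ℂ) ≠ 0 := Nat.cast_ne_zero.mpr hp.pos.ne'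
  set U : Set ℂ := {z | 0 < z.im} with hUdef
  have hUopen : IsOpen U := isOpen_lt continuous_const Complex.continuous_im
  set F : Fin g → ℂ → ℂ := fun i => ((f i : ℍ → ℂ)) ∘ UpperHalfPlane.ofComplex with hFdef
  have hFan : ∀ i, AnalyticOnNhd ℂ (F i) U := fun i =>
    (UpperHalfPlane.mdifferentiable_iff.mp (f i).holo').analyticOnNhd hUopen
  set γfun : ℂ → ℂ := fun w => -1 / ((p : ℂ) * w) with hγdef
  set hfun : ℂ → ℂ := fun w => (p : ℂ) * w ^ 2 with hhdef
  -- the action of A is given by γfun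
  have hdetpos : 0 < (A : GL (Fin 2) ℝ).det.val := by
    rw [Matrix.GeneralLinearGroup.val_det_apply, hA, Matrix.det_fin_two_of]
    have : (0:ℝ) < p := Nat.cast_pos.mpr hp.pos
    linarith
  have hσ : ∀ z : ℂ, σ (A : GL (Fin 2) ℝ) z = z := by
    intro z; rw [σ, if_pos hdetpos, ContinuousAlgEquiv.refl_apply]
  have hsmul : ∀ τ : ℍ, (((A : GL (Fin 2) ℝ) • τ : ℍ) : ℂ) = γfun (τ : ℂ) := by
    intro τ
    rw [UpperHalfPlane.coe_smul_of_det_pos hdetpos]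
    simp [UpperHalfPlane.num, UpperHalfPlane.denom, hA, hγdef]
  have hne : ∀ w : ℂ, w ∈ U → w ≠ 0 := by
    intro w hw h0
    rw [h0] at hw
    simp [hUdef] at hw
  have hγU : Set.MapsTo γfun U U := by
    intro w hw
    set τ : ℍ := ⟨w, hw⟩ with hτdef
    have h1 : γfun w = (((A : GL (Fin 2) ℝ) • τ : ℍ) : ℂ) := (hsmul τ).symm
    show 0 < (γfun w).im
    rw [h1]
    exact ((A : GL (Fin 2) ℝ) • τ).2
  have hγan : AnalyticOnNhd ℂ γfun U := by
    apply DifferentiableOn.analyticOnNhd ?_ hUopen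
    apply DifferentiableOn.div (differentiableOn_const _)
      ((differentiable_const _).mul differentiable_id).differentiableOn
    exact fun w hw => mul_ne_zero hp0 (hne w hw)
  have hhan : AnalyticOnNhd ℂ hfun U :=
    (((differentiable_const _).mul (differentiable_pow 2)).differentiableOn).analyticOnNhd hUopen
  have hderiv : ∀ w : ℂ, deriv γfun w = ((p : ℂ) * w ^ 2)⁻¹ := by
    intro w
    have h1 : γfun = fun w => (-((p : ℂ))⁻¹) * w⁻¹ := by
      funext x
      show -1 / ((p : ℂ) * x) = -((p : ℂ))⁻¹ * x⁻¹
      rw [neg_div, one_div, mul_inv]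
      ring
    rw [h1, deriv_const_mul_field, deriv_inv, mul_inv]
    ring
  -- functional equation
  have hfeq : ∀ i, ∀ w : ℂ, w ∈ U → F i (γfun w) = hfun w * F i w := by
    intro i w hw
    set τ : ℍ := ⟨w, hw⟩ with hτdef
    have hcoe : (τ : ℂ) = w := rfl
    have h1 : γfun w = (((A : GL (Fin 2) ℝ) • τ : ℍ) : ℂ) := (hsmul τ).symm
    have h2 : F i (γfun w) = (f i : ℍ → ℂ) ((A : GL (Fin 2) ℝ) • τ) := by
      rw [h1, hFdef]
      simp only [Function.comp_apply, UpperHalfPlane.ofComplex_apply]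
    have h3 : F i w = (f i : ℍ → ℂ) τ := by
      rw [hFdef]
      simp only [Function.comp_apply, ← hcoe, UpperHalfPlane.ofComplex_apply]
    rw [h2, h3]
    have hs := congrFun (hinv i) τ
    rw [ModularForm.slash_def] at hs
    simp only [hσ] at hs
    have hdet : ((|(A : GL (Fin 2) ℝ).det.val| : ℝ) : ℂ) = (p : ℂ) := by
      rw [abs_of_pos hdetpos, Matrix.GeneralLinearGroup.val_det_apply, hA, Matrix.det_fin_two_of]
      push_cast
      ring
    have hdenom : UpperHalfPlane.denom A τ = (p : ℂ) * w := by
      simp [UpperHalfPlane.denom, hA, hcoe]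
    rw [hdet, hdenom] at hs
    have hw0 : w ≠ 0 := hne w hw
    have hpw : (p : ℂ) * w ≠ 0 := mul_ne_zero hp0 hw0
    have hzp : ((p : ℂ) * w) ^ (-(2:ℤ)) = (((p:ℂ) * w) ^ (2:ℕ))⁻¹ := by
      rw [_root_.zpow_neg]
      norm_cast
    rw [hzp] at hs
    have hone : ((p:ℂ)) ^ ((2:ℤ) - 1) = (p : ℂ) := by norm_num
    rw [hone] at hs
    field_simp at hs
    show (f i : ℍ → ℂ) ((A : GL (Fin 2) ℝ) • τ) = (p : ℂ) * w ^ 2 * (f i : ℍ → ℂ) τ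
    apply mul_right_cancel₀ hp0
    linear_combination (p : ℂ) * hs
  -- the determinant identity
  obtain ⟨g', rfl⟩ : ∃ g', g = g' + 1 := ⟨g - 1, by omega⟩
  set T : ℕ := ∑ j ∈ Finset.range (g' + 1), j with hTdef
  set s : ℕ := (g' + 1) + T with hsdef
  have hT2 : T * 2 = (g' + 1) * g' := by
    rw [hTdef]
    simpa using Finset.sum_range_id_mul_two (g' + 1)
  have h2s : 2 * s = (g' + 1) * ((g' + 1) + 1) := by
    calc 2 * s = 2 * (g' + 1) + T * 2 := by rw [hsdef]; ring
    _ = 2 * (g' + 1) + (g' + 1) * g' := by rw [hT2]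
    _ = (g' + 1) * ((g' + 1) + 1) := by ring
  have hdetmain : ∀ τ : ℍ,
      Matrix.det (Matrix.of fun i j : Fin (g' + 1) =>
          iteratedDeriv (j : ℕ) (F i) (γfun (τ : ℂ)))
        = hfun (τ : ℂ) ^ s *
          Matrix.det (Matrix.of fun i j : Fin (g' + 1) =>
            iteratedDeriv (j : ℕ) (F i) (τ : ℂ)) := by
    intro τ
    set z : ℂ := (τ : ℂ) with hzdef
    have hzU : z ∈ U := τ.2
    have hz0 : z ≠ 0 := hne z hzU
    have hhz : hfun z ≠ 0 := mul_ne_zero hp0 (pow_ne_zero 2 hz0)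
    have hone : AnalyticOnNhd ℂ (fun _ : ℂ => (1 : ℂ)) U := fun x _ => analyticAt_const
    have hdet1 := det_transform hUopen hγan hone hγU hzU F hFan
    have hdet2 := det_transform hUopen analyticOnNhd_id hhan (Set.mapsTo_id U) hzU F hFan
    have hmid : ∀ i j : Fin (g' + 1),
        iteratedDeriv (j : ℕ) (fun x => (1:ℂ) * F i (γfun x)) z
          = iteratedDeriv (j : ℕ) (fun x => hfun x * F i x) z := by
      intro i j
      refine Filter.EventuallyEq.iteratedDeriv_eq _ ?_
      refine Filter.eventuallyEq_of_mem (hUopen.mem_nhds hzU) (fun x hx => ?_)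
      simp only [one_mul]
      exact hfeq i x hx
    have hdet12 : Matrix.det (Matrix.of fun i j : Fin (g' + 1) =>
          iteratedDeriv (j : ℕ) (fun x => (1:ℂ) * F i (γfun x)) z)
        = Matrix.det (Matrix.of fun i j : Fin (g' + 1) =>
          iteratedDeriv (j : ℕ) (fun x => hfun x * F i x) z) := by
      congr 1
      ext i j
      exact hmid i j
    rw [hdet1, hdet2] at hdet12
    have hprod1 : (∏ j : Fin (g' + 1), ((1:ℂ) * (deriv γfun z) ^ (j : ℕ)))
        = ((hfun z)⁻¹) ^ T := by
      simp only [one_mul]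
      rw [Finset.prod_pow_eq_pow_sum]
      have hb : deriv γfun z = (hfun z)⁻¹ := hderiv z
      rw [hb]
      congr 1
      rw [hTdef, ← Fin.sum_univ_eq_sum_range]
    have hprod2 : (∏ j : Fin (g' + 1), (hfun z * (deriv (fun x : ℂ => x) z) ^ (j : ℕ)))
        = hfun z ^ (g' + 1) := by
      have hid : deriv (fun x : ℂ => x) z = 1 := by simp
      simp [hid]
    rw [hprod1, hprod2] at hdet12
    have hzT : (hfun z)⁻¹ ^ T * hfun z ^ T = 1 := by
      rw [← mul_pow, inv_mul_cancel₀ hhz, one_pow]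
    rw [hsdef]
    calc Matrix.det (Matrix.of fun i j : Fin (g' + 1) =>
            iteratedDeriv (j : ℕ) (F i) (γfun z))
        = Matrix.det (Matrix.of fun i j : Fin (g' + 1) =>
            iteratedDeriv (j : ℕ) (F i) (γfun z)) * ((hfun z)⁻¹ ^ T * hfun z ^ T) := by
          rw [hzT, mul_one]
      _ = (Matrix.det (Matrix.of fun i j : Fin (g' + 1) =>
            iteratedDeriv (j : ℕ) (F i) (γfun z)) * (hfun z)⁻¹ ^ T) * hfun z ^ T := by ring
      _ = (Matrix.det (Matrix.of fun i j : Fin (g' + 1) =>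
            iteratedDeriv (j : ℕ) (F i) z) * hfun z ^ (g' + 1)) * hfun z ^ T := by rw [hdet12]
      _ = hfun z ^ ((g' + 1) + T) * Matrix.det (Matrix.of fun i j : Fin (g' + 1) =>
            iteratedDeriv (j : ℕ) (F i) z) := by rw [pow_add]; ring
  -- final assembly
  funext τ
  rw [ModularForm.slash_def]
  simp only [hσ]
  have hzU : (τ : ℂ) ∈ U := τ.2
  have hz0 : (τ : ℂ) ≠ 0 := hne _ hzU
  have hW1 : wronskianH (fun i => (f i : ℍ → ℂ)) ((A : GL (Fin 2) ℝ) • τ)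
      = hfun (τ : ℂ) ^ s * wronskianH (fun i => (f i : ℍ → ℂ)) τ := by
    simp only [wronskianH]
    rw [hsmul τ]
    exact hdetmain τ
  have hdetA : ((|(A : GL (Fin 2) ℝ).det.val| : ℝ) : ℂ) = (p : ℂ) := by
    rw [abs_of_pos hdetpos, Matrix.GeneralLinearGroup.val_det_apply, hA, Matrix.det_fin_two_of]
    push_cast
    ring
  have hdenom : UpperHalfPlane.denom A τ = (p : ℂ) * (τ : ℂ) := by
    simp [UpperHalfPlane.denom, hA]
  rw [hW1, hdetA, hdenom]
  obtain ⟨s', hs'⟩ : ∃ s', s = s' + 1 := ⟨s - 1, by omega⟩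
  rw [hs'] at h2s
  have hK : ((g' + 1 : ℕ) : ℤ) * (((g' + 1 : ℕ) : ℤ) + 1) = ((2 * (s' + 1) : ℕ) : ℤ) := by
    exact_mod_cast h2s.symm
  rw [hK]
  have hsdiv : (g' + 1) * ((g' + 1) + 1) / 2 = s' + 1 := by omega
  have hexp : ((((g' + 1) * ((g' + 1) + 1) / 2 : ℕ) : ℤ) - 1) = (s' : ℤ) := by
    rw [hsdiv]
    push_cast
    ring
  rw [hexp, hs']
  have hpw : (p : ℂ) * (τ : ℂ) ≠ 0 := mul_ne_zero hp0 hz0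
  have hfactor : hfun (τ : ℂ) ^ (s' + 1) * (p : ℂ) ^ (((2 * (s' + 1) : ℕ) : ℤ) - 1)
      * ((p : ℂ) * (τ : ℂ)) ^ (-((2 * (s' + 1) : ℕ) : ℤ)) = (p : ℂ) ^ (s' : ℤ) := by
    have h1 : (((2 * (s' + 1) : ℕ) : ℤ) - 1) = ((2 * s' + 1 : ℕ) : ℤ) := by push_cast; ring
    rw [h1, zpow_natCast, _root_.zpow_neg, zpow_natCast, zpow_natCast]
    simp only [hhdef]
    field_simp
    ring
  rw [← hfactor]
  ring
end

section
/- Let p be a prime and let f_1, …, f_g be cusp forms of weight 2 on Γ0(p). Let W : ℍ → ℂ be the Wronskian W(τ) := det((d/dτ)^{j−1} f_i(τ))_{1≤i,j≤g}. Then W satisfies the weight g(g+1) transformation law on Γ0(p): for every γ ∈ Γ0(p), W ∣[g(g+1)] γ = W. -/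
/-!
For any `u` and `φ`, the `j`-th derivative of `u · (F ∘ φ)` equals `∑_{m ≤ j} c_{jm} · F⁽ᵐ⁾ ∘ φ`
with coefficients independent of `F` and `c_{jj} = u φ'ʲ`. So the Wronski matrix of the
`u · (F_i ∘ φ)` is that of the `F_i`, taken at `φ`, times a triangular matrix, whence
`W(u · (F ∘ φ)) = u^g φ'^(g(g-1)/2) · W(F) ∘ φ`.
For `f_i` of weight `k` and `D = cτ + d` we have `f_i ∘ γ = D^k f_i` and `(γτ)' = D⁻²`;
computing the Wronskian of the `f_i ∘ γ` in these two ways gives `W(γτ) = D^(gk + g(g-1)) W(τ)`.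
-/

open UpperHalfPlane ModularForm Matrix CongruenceSubgroup
open scoped MatrixGroups ModularForm Manifold

open Finset Filter Topology

section Wronskian

variable {𝕜 : Type*} [NontriviallyNormedField 𝕜] {U V : Set 𝕜} {u φ : 𝕜 → 𝕜}

theorem AnalyticOnNhd.iteratedDeriv_of_isOpen {F : 𝕜 → 𝕜} (hF : AnalyticOnNhd 𝕜 F U) (hU : IsOpen U)
    (m : ℕ) : AnalyticOnNhd 𝕜 (iteratedDeriv m F) U := by
  induction m with
  | zero => simpa using hF
  | succ m ih => simpa only [iteratedDeriv_succ] using ih.deriv_of_isOpen hU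

/-- `chainCoeff u φ j m` is the coefficient of `F⁽ᵐ⁾ ∘ φ` in `(u • F ∘ φ)⁽ʲ⁾`. -/
noncomputable def chainCoeff (u φ : 𝕜 → 𝕜) : ℕ → ℕ → 𝕜 → 𝕜
  | 0, m => if m = 0 then u else 0
  | j + 1, 0 => deriv (chainCoeff u φ j 0)
  | j + 1, m + 1 => deriv (chainCoeff u φ j (m + 1)) + chainCoeff u φ j m * deriv φ

theorem chainCoeff_eq_zero_of_lt : ∀ {j m : ℕ}, j < m → chainCoeff u φ j m = 0
  | 0, m + 1, _ => by simp [chainCoeff]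
  | j + 1, m + 1, h => by
    rw [chainCoeff, chainCoeff_eq_zero_of_lt (by omega : j < m + 1),
      chainCoeff_eq_zero_of_lt (by omega : j < m), deriv_zero, zero_mul, add_zero]

theorem chainCoeff_self : ∀ j : ℕ, chainCoeff u φ j j = u * deriv φ ^ j
  | 0 => by simp [chainCoeff]
  | j + 1 => by
    rw [chainCoeff, chainCoeff_eq_zero_of_lt j.lt_succ_self, chainCoeff_self j, deriv_zero,
      zero_add, pow_succ, mul_assoc]

theorem analyticOnNhd_chainCoeff (hU : IsOpen U) (hu : AnalyticOnNhd 𝕜 u U)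
    (hφ : AnalyticOnNhd 𝕜 φ U) : ∀ j m : ℕ, AnalyticOnNhd 𝕜 (chainCoeff u φ j m) U
  | 0, m => by
    unfold chainCoeff
    split_ifs
    exacts [hu, analyticOnNhd_const]
  | j + 1, 0 => (analyticOnNhd_chainCoeff hU hu hφ j 0).deriv_of_isOpen hU
  | j + 1, m + 1 => ((analyticOnNhd_chainCoeff hU hu hφ j (m + 1)).deriv_of_isOpen hU).add
      ((analyticOnNhd_chainCoeff hU hu hφ j m).mul (hφ.deriv_of_isOpen hU))

theorem sum_range_chainCoeff_succ (j : ℕ) (X : ℕ → 𝕜) (z : 𝕜) :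
    ∑ m ∈ range (j + 2), chainCoeff u φ (j + 1) m z * X m =
      ∑ m ∈ range (j + 1), (deriv (chainCoeff u φ j m) z * X m +
        chainCoeff u φ j m z * deriv φ z * X (m + 1)) := by
  have hlast : ∑ m ∈ range (j + 1), deriv (chainCoeff u φ j (m + 1)) z * X (m + 1) =
      ∑ m ∈ range j, deriv (chainCoeff u φ j (m + 1)) z * X (m + 1) := by
    rw [sum_range_succ, chainCoeff_eq_zero_of_lt j.lt_succ_self, deriv_zero, Pi.zero_apply,
      zero_mul, add_zero]
  rw [sum_range_succ' (fun m => chainCoeff u φ (j + 1) m z * X m), sum_add_distrib,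
    sum_range_succ' (fun m => deriv (chainCoeff u φ j m) z * X m)]
  simp only [chainCoeff, Pi.add_apply, Pi.mul_apply, add_mul, sum_add_distrib, hlast]
  ring

theorem iteratedDeriv_mul_comp (hU : IsOpen U) (hV : IsOpen V) (hu : AnalyticOnNhd 𝕜 u U)
    (hφ : AnalyticOnNhd 𝕜 φ U) (hUV : Set.MapsTo φ U V) {F : 𝕜 → 𝕜} (hF : AnalyticOnNhd 𝕜 F V)
    (j : ℕ) :
    ∀ z ∈ U, iteratedDeriv j (fun w => u w * F (φ w)) z =
      ∑ m ∈ range (j + 1), chainCoeff u φ j m z * iteratedDeriv m F (φ z) := by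
  induction j with
  | zero => intro z _; simp [chainCoeff]
  | succ j ih =>
    intro z hz
    have hterm (m : ℕ) : HasDerivAt (fun w => chainCoeff u φ j m w * iteratedDeriv m F (φ w))
        (deriv (chainCoeff u φ j m) z * iteratedDeriv m F (φ z) +
          chainCoeff u φ j m z * deriv φ z * iteratedDeriv (m + 1) F (φ z)) z := by
      have hc := (analyticOnNhd_chainCoeff hU hu hφ j m z hz).differentiableAt.hasDerivAt
      have hFm := ((hF.iteratedDeriv_of_isOpen hV m (φ z) (hUV hz)).differentiableAt.hasDerivAt
        ).comp z (hφ z hz).differentiableAt.hasDerivAt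
      rw [← iteratedDeriv_succ] at hFm
      exact (hc.fun_mul hFm).congr_deriv (by rw [Function.comp_apply]; ring)
    rw [iteratedDeriv_succ, (eventuallyEq_of_mem (hU.mem_nhds hz) ih).deriv_eq,
      (HasDerivAt.fun_sum fun m _ => hterm m).deriv, sum_range_chainCoeff_succ]

noncomputable def wronskian {g : ℕ} (F : Fin g → 𝕜 → 𝕜) (z : 𝕜) : 𝕜 :=
  (Matrix.of fun i j : Fin g => iteratedDeriv j (F i) z).det

theorem wronskian_congr {g : ℕ} {F G : Fin g → 𝕜 → 𝕜} {z : 𝕜} (h : ∀ i, F i =ᶠ[𝓝 z] G i) :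
    wronskian F z = wronskian G z := by
  simp only [wronskian, (h _).iteratedDeriv_eq]

theorem wronskian_mul_comp (hU : IsOpen U) (hV : IsOpen V) (hu : AnalyticOnNhd 𝕜 u U)
    (hφ : AnalyticOnNhd 𝕜 φ U) (hUV : Set.MapsTo φ U V) {g : ℕ} {F : Fin g → 𝕜 → 𝕜}
    (hF : ∀ i, AnalyticOnNhd 𝕜 (F i) V) {z : 𝕜} (hz : z ∈ U) :
    wronskian (fun i w => u w * F i (φ w)) z =
      u z ^ g * deriv φ z ^ (∑ j ∈ range g, j) * wronskian F (φ z) := by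
  set C : Matrix (Fin g) (Fin g) 𝕜 := .of fun j m => chainCoeff u φ j m z
  have hC : C.IsLowerTriangular := fun j m (hjm : j < m) =>
    congrFun (chainCoeff_eq_zero_of_lt (u := u) (φ := φ) hjm) z
  have hmat : (Matrix.of fun i j : Fin g => iteratedDeriv j (fun w => u w * F i (φ w)) z) =
      (Matrix.of fun i m : Fin g => iteratedDeriv m (F i) (φ z)) * Cᵀ := by
    ext i j
    simp only [of_apply, mul_apply, transpose_apply, C, mul_comm (iteratedDeriv _ (F i) _),
      iteratedDeriv_mul_comp hU hV hu hφ hUV (hF i) j z hz,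
      Fin.sum_univ_eq_sum_range (fun m => chainCoeff u φ j m z * iteratedDeriv m (F i) (φ z))]
    exact sum_subset (range_subset_range.2 j.isLt) fun m _ hm => by
      rw [chainCoeff_eq_zero_of_lt (by simpa using hm), Pi.zero_apply, zero_mul]
  rw [wronskian, hmat, det_mul, det_transpose, det_of_isLowerTriangular _ hC, wronskian]
  simp only [C, of_apply, chainCoeff_self, Pi.mul_apply, Pi.pow_apply, prod_mul_distrib,
    prod_const, card_univ, Fintype.card_fin, prod_pow_eq_pow_sum,
    Fin.sum_univ_eq_sum_range (fun j => j)]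
  ring

theorem wronskian_comp (hU : IsOpen U) (hV : IsOpen V) (hφ : AnalyticOnNhd 𝕜 φ U)
    (hUV : Set.MapsTo φ U V) {g : ℕ} {F : Fin g → 𝕜 → 𝕜} (hF : ∀ i, AnalyticOnNhd 𝕜 (F i) V)
    {z : 𝕜} (hz : z ∈ U) :
    wronskian (fun i w => F i (φ w)) z = deriv φ z ^ (∑ j ∈ range g, j) * wronskian F (φ z) := by
  simpa using wronskian_mul_comp hU hV analyticOnNhd_const hφ hUV hF hz (u := fun _ => 1)

theorem wronskian_mul (hU : IsOpen U) (hu : AnalyticOnNhd 𝕜 u U) {g : ℕ}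
    {F : Fin g → 𝕜 → 𝕜} (hF : ∀ i, AnalyticOnNhd 𝕜 (F i) U) {z : 𝕜} (hz : z ∈ U) :
    wronskian (fun i w => u w * F i w) z = u z ^ g * wronskian F z := by
  simpa using wronskian_mul_comp hU hU hu analyticOnNhd_id (Set.mapsTo_id U) hF hz

end Wronskian

theorem wronskianH_SL_smul_mul_inv_denom_sq_pow {g : ℕ} {k : ℤ} (γ : SL(2, ℤ))
    {f : Fin g → ℍ → ℂ} (hf : ∀ i, MDiff (f i))
    (hγ : ∀ i τ, f i (γ • τ) = denom γ τ ^ k * f i τ) (τ : ℍ) :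
    wronskianH f (γ • τ) * (denom γ τ ^ 2)⁻¹ ^ (∑ j ∈ range g, j) =
      (denom γ τ ^ k) ^ g * wronskianH f τ := by
  set F : Fin g → ℂ → ℂ := fun i => f i ∘ ofComplex
  set σ : ℂ → ℂ := fun w => ↑(γ • ofComplex w)
  set u : ℂ → ℂ := fun w => denom γ w ^ k
  have hdet : (γ : GL (Fin 2) ℝ).val.det = 1 := by
    rw [← Matrix.GeneralLinearGroup.val_det_apply]; simp
  have hF (i : Fin g) : AnalyticOnNhd ℂ (F i) upperHalfPlaneSet :=
    (UpperHalfPlane.mdifferentiable_iff.mp (hf i)).analyticOnNhd isOpen_upperHalfPlaneSet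
  have hσ : AnalyticOnNhd ℂ σ upperHalfPlaneSet := fun w hw =>
    analyticAt_smul (hdet ▸ one_pos) ⟨w, hw⟩
  have hσ' : deriv σ τ = (denom γ τ ^ 2)⁻¹ := by
    have := deriv_smul (g := γ) (hdet ▸ one_pos) τ
    rwa [hdet, Complex.ofReal_one, one_div] at this
  have hu : AnalyticOnNhd ℂ u upperHalfPlaneSet :=
    DifferentiableOn.analyticOnNhd (fun w hw =>
      (hasDerivAt_denom_zpow γ k ⟨w, hw⟩).differentiableAt.differentiableWithinAt)
      isOpen_upperHalfPlaneSet
  have hFσ (i : Fin g) : (fun w => F i (σ w)) =ᶠ[𝓝 (τ : ℂ)] fun w => u w * F i w := by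
    filter_upwards [isOpen_upperHalfPlaneSet.mem_nhds τ.im_pos] with w hw
    simpa [F, σ, u, ofComplex_apply_of_im_pos hw] using hγ i (ofComplex w)
  calc wronskianH f (γ • τ) * (denom γ τ ^ 2)⁻¹ ^ (∑ j ∈ range g, j)
      = deriv σ τ ^ (∑ j ∈ range g, j) * wronskian F (σ τ) := by
        rw [hσ', mul_comm, show σ τ = ↑(γ • τ) by simp [σ]]; rfl
    _ = wronskian (fun i w => F i (σ w)) τ :=
        (wronskian_comp isOpen_upperHalfPlaneSet isOpen_upperHalfPlaneSet hσ
          (fun w _ => (γ • ofComplex w).im_pos) hF τ.im_pos).symm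
    _ = wronskian (fun i w => u w * F i w) τ := wronskian_congr hFσ
    _ = u τ ^ g * wronskianH f τ := wronskian_mul isOpen_upperHalfPlaneSet hu hF τ.im_pos

theorem wronskianH_SL_smul {g : ℕ} {k : ℤ} (γ : SL(2, ℤ)) {f : Fin g → ℍ → ℂ}
    (hf : ∀ i, MDiff (f i)) (hγ : ∀ i τ, f i (γ • τ) = denom γ τ ^ k * f i τ) (τ : ℍ) :
    wronskianH f (γ • τ) = denom γ τ ^ ((g : ℤ) * (k + g - 1)) * wronskianH f τ := by
  have hD : denom γ τ ≠ 0 := denom_ne_zero _ τ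
  have hS (n : ℕ) : (∑ j ∈ range n, (j : ℤ)) * 2 = n * (n - 1) := by
    induction n with
    | zero => simp
    | succ n ih => rw [sum_range_succ, add_mul, ih]; push_cast; ring
  have h := wronskianH_SL_smul_mul_inv_denom_sq_pow γ hf hγ τ
  rw [inv_pow, mul_inv_eq_iff_eq_mul₀ (pow_ne_zero _ (pow_ne_zero _ hD))] at h
  have hexp : (g : ℤ) * (k + g - 1) = k * g + (2 * ∑ j ∈ range g, j : ℕ) := by
    push_cast
    linear_combination -hS g
  rw [h, hexp, zpow_add₀ hD, _root_.zpow_mul, zpow_natCast, zpow_natCast, pow_mul]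
  ring

theorem wronskian_slash_invariant_Gamma0_general
    (p : ℕ) (g : ℕ)
    (f : Fin g → CuspForm (Gamma0 p) 2) :
    ∀ γ ∈ Gamma0 p,
      wronskianH (fun i => (f i : ℍ → ℂ)) ∣[(g * (g + 1) : ℤ)] γ =
        wronskianH (fun i => (f i : ℍ → ℂ)) := by
  intro γ hγ
  ext τ
  rw [SL_slash_apply, wronskianH_SL_smul (f := fun i => f i) γ
    (fun i => ModularFormClass.holo (f i))
    (fun i => SlashInvariantForm.slash_action_eqn_SL'' (f i) hγ) τ, mul_right_comm,
    ← zpow_add₀ (denom_ne_zero _ τ), show (g : ℤ) * (2 + g - 1) + -(g * (g + 1)) = 0 by ring,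
    zpow_zero, one_mul]

theorem wronskian_slash_invariant_Gamma0
    (p : ℕ) (hp : p.Prime) (g : ℕ)
    (f : Fin g → CuspForm (Gamma0 p) 2) :
    ∀ γ ∈ Gamma0 p,
      wronskianH (fun i => (f i : ℍ → ℂ)) ∣[(g * (g + 1) : ℤ)] γ =
        wronskianH (fun i => (f i : ℍ → ℂ)) :=
  wronskian_slash_invariant_Gamma0_general p g f
end

section
/- Let p ≥ 5 be a prime and let g ≥ 2 be an integer. With C_p(k;x) ∈ ℤ[x] defined by the case table below and G_p(x) := ∏_{s=1}^{g²−g} C_p(2g(g+p) + (g²−g−s)(p−1); x), one has: G_p(x) = 1 if p ≡ 1 (mod 12); G_p(x) = x^{⌈(g²−g)/3⌉} if p ≡ 5 (mod 12); G_p(x) = (x−1728)^{(g²−g)/2} if p ≡ 7 (mod 12); and G_p(x) = x^{⌈(g²−g)/3⌉}(x−1728)^{(g²−g)/2} if p ≡ 11 (mod 12). -/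
open Polynomial Finset

/-- The correction polynomial `C_p(k;x)` of Ahlgren–Ono, defined by cases on
`(k, p)` modulo 12. -/
noncomputable def Cpoly (p k : ℕ) : Polynomial ℤ :=
  if (k % 12 = 2 ∧ p % 12 = 5) ∨ (k % 12 = 8 ∧ p % 12 = 5) ∨
      (k % 12 = 8 ∧ p % 12 = 11) then X
  else if (k % 12 = 2 ∧ p % 12 = 7) ∨ (k % 12 = 6 ∧ p % 12 = 7) ∨
      (k % 12 = 10 ∧ p % 12 = 7) ∨ (k % 12 = 6 ∧ p % 12 = 11) ∨
      (k % 12 = 10 ∧ p % 12 = 11) then X - C 1728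
  else if k % 12 = 2 ∧ p % 12 = 11 then X * (X - C 1728)
  else 1

/-- The product `G_p(x) = ∏_{s=1}^{g²-g} C_p(2g(g+p) + (g²-g-s)(p-1); x)`. -/
noncomputable def Gpoly (p g : ℕ) : Polynomial ℤ :=
  ∏ s ∈ Finset.Icc 1 (g ^ 2 - g), Cpoly p (2 * g * (g + p) + (g ^ 2 - g - s) * (p - 1))

/-! Writing `k_s = 2g(g+p) + (g²-g-s)(p-1)` for the index of the `s`-th factor, one has
`k_s + s(p-1) = g(g+1)(p+1)`, which is divisible by `2(p+1)` since `g(g+1)` is even.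
Hence `k_s ≡ 2s (mod 6)` when `p ≡ 2 (mod 3)` and `k_s ≡ 2s (mod 4)` when `p ≡ 3 (mod 4)`.
On even `k` (and `p` prime to 6) the table defining `C_p(k;x)` splits as a factor `x` exactly
when `p ≡ 2 (mod 3)` and `k ≡ 2 (mod 6)`, times a factor `x - 1728` exactly when
`p ≡ 3 (mod 4)` and `k ≡ 2 (mod 4)`. So `G_p` is `x` to the number of `s ≤ g² - g` with
`s ≡ 1 (mod 3)`, times `x - 1728` to the number of odd `s ≤ g² - g`. -/

theorem prod_Icc_ite_modEq_one {M : Type*} [CommMonoid M] (a : M) {m : ℕ} (hm : 0 < m)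
    (N : ℕ) : ∏ s ∈ Icc 1 N, (if s ≡ 1 [MOD m] then a else 1) = a ^ ((N + m - 1) / m) := by
  induction N with
  | zero => rw [Icc_eq_empty (by omega), prod_empty, Nat.div_eq_of_lt (by omega), pow_zero]
  | succ N ih =>
    have hdvd : m ∣ N + m ↔ N + 1 ≡ 1 [MOD m] := by
      rw [Nat.dvd_add_self_right, ← Nat.modEq_zero_iff_dvd]
      exact ⟨fun h => h.add_right 1, fun h => h.add_right_cancel' 1⟩
    have hstep : (N + 1 + m - 1) / m = (N + m - 1) / m + if N + 1 ≡ 1 [MOD m] then 1 else 0 := by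
      rw [show N + 1 + m - 1 = N + m - 1 + 1 by omega, Nat.succ_div,
        show N + m - 1 + 1 = N + m by omega]
      simp only [hdvd]
    rw [prod_Icc_succ_top (by omega), ih, hstep, pow_add]
    split_ifs <;> simp

lemma Cpoly_eq_mul_of_even {p k : ℕ} (hp2 : p % 2 = 1) (hp3 : p % 3 ≠ 0) (hk : 2 ∣ k) :
    Cpoly p k = (if p % 3 = 2 ∧ k % 6 = 2 then X else 1) *
      (if p % 4 = 3 ∧ k % 4 = 2 then X - C 1728 else 1) := by
  have hp12 : p % 12 = 1 ∨ p % 12 = 5 ∨ p % 12 = 7 ∨ p % 12 = 11 := by omega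
  have hk12 : k % 12 = 0 ∨ k % 12 = 2 ∨ k % 12 = 4 ∨ k % 12 = 6 ∨ k % 12 = 8 ∨
      k % 12 = 10 := by omega
  obtain ⟨hp3', hp4, hk6, hk4⟩ : p % 3 = p % 12 % 3 ∧ p % 4 = p % 12 % 4 ∧
      k % 6 = k % 12 % 6 ∧ k % 4 = k % 12 % 4 := by omega
  rw [hp3', hp4, hk6, hk4]
  unfold Cpoly
  rcases hp12 with hp | hp | hp | hp <;> rcases hk12 with hk | hk | hk | hk | hk | hk <;>
    simp [hp, hk]

section index

variable {g p s : ℕ}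

lemma index_add_eq (hs : s ≤ g ^ 2 - g) (hp : 1 ≤ p) :
    2 * g * (g + p) + (g ^ 2 - g - s) * (p - 1) + s * (p - 1) = g * (g + 1) * (p + 1) := by
  have hg : g ≤ g ^ 2 := by nlinarith
  zify [hs, hg, hp]
  ring

lemma dvd_index_add {m : ℕ} (hm : m ∣ 2 * (p + 1)) (hs : s ≤ g ^ 2 - g) (hp : 1 ≤ p) :
    m ∣ 2 * g * (g + p) + (g ^ 2 - g - s) * (p - 1) + s * (p - 1) := by
  rw [index_add_eq hs hp]
  exact hm.trans (Nat.mul_dvd_mul_right (Nat.even_mul_succ_self g).two_dvd _)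

lemma two_dvd_index (hp : p % 2 = 1) :
    2 ∣ 2 * g * (g + p) + (g ^ 2 - g - s) * (p - 1) :=
  Nat.dvd_add (Dvd.dvd.mul_right (dvd_mul_right 2 g) _) (Dvd.dvd.mul_left (by omega) _)

lemma index_mod_six_eq_two_iff (hp : p % 6 = 5) (hs : s ≤ g ^ 2 - g) :
    (2 * g * (g + p) + (g ^ 2 - g - s) * (p - 1)) % 6 = 2 ↔ s ≡ 1 [MOD 3] := by
  have hdvd := dvd_index_add (show 6 ∣ 2 * (p + 1) by omega) hs (by omega)
  have hmul : s * (p - 1) % 6 = s % 6 * 4 % 6 := by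
    rw [Nat.mul_mod, show (p - 1) % 6 = 4 by omega]
  generalize 2 * g * (g + p) + (g ^ 2 - g - s) * (p - 1) = k at *
  generalize s * (p - 1) = t at *
  unfold Nat.ModEq
  omega

lemma index_mod_four_eq_two_iff (hp : p % 4 = 3) (hs : s ≤ g ^ 2 - g) :
    (2 * g * (g + p) + (g ^ 2 - g - s) * (p - 1)) % 4 = 2 ↔ s ≡ 1 [MOD 2] := by
  have hdvd := dvd_index_add (show 4 ∣ 2 * (p + 1) by omega) hs (by omega)
  have hmul : s * (p - 1) % 4 = s % 4 * 2 % 4 := by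
    rw [Nat.mul_mod, show (p - 1) % 4 = 2 by omega]
  generalize 2 * g * (g + p) + (g ^ 2 - g - s) * (p - 1) = k at *
  generalize s * (p - 1) = t at *
  unfold Nat.ModEq
  omega

lemma Cpoly_index (hp2 : p % 2 = 1) (hp3 : p % 3 ≠ 0) (hs : s ≤ g ^ 2 - g) :
    Cpoly p (2 * g * (g + p) + (g ^ 2 - g - s) * (p - 1)) =
      (if p % 3 = 2 ∧ s ≡ 1 [MOD 3] then X else 1) *
        (if p % 4 = 3 ∧ s ≡ 1 [MOD 2] then X - C 1728 else 1) := by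
  rw [Cpoly_eq_mul_of_even hp2 hp3 (two_dvd_index hp2)]
  congr 1
  · exact if_congr (and_congr_right fun _ => index_mod_six_eq_two_iff (by omega) hs) rfl rfl
  · exact if_congr (and_congr_right fun _ => index_mod_four_eq_two_iff (by omega) hs) rfl rfl

end index

lemma Gpoly_eq_of_coprime {p : ℕ} (g : ℕ) (hp2 : p % 2 = 1) (hp3 : p % 3 ≠ 0) :
    Gpoly p g = (if p % 3 = 2 then X ^ ((g ^ 2 - g + 2) / 3) else 1) *
      (if p % 4 = 3 then (X - C 1728) ^ ((g ^ 2 - g) / 2) else 1) := by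
  have heven : 2 ∣ g ^ 2 - g := by
    rw [sq, ← Nat.mul_sub_one]
    exact (Nat.even_mul_pred_self g).two_dvd
  rw [Gpoly, prod_congr rfl fun s hs => Cpoly_index hp2 hp3 (mem_Icc.mp hs).2,
    prod_mul_distrib]
  simp only [ite_and, prod_ite_irrel, prod_const_one,
    prod_Icc_ite_modEq_one _ three_pos, prod_Icc_ite_modEq_one _ two_pos]
  rw [show g ^ 2 - g + 3 - 1 = g ^ 2 - g + 2 by omega,
    show (g ^ 2 - g + 2 - 1) / 2 = (g ^ 2 - g) / 2 by omega]

theorem Gpoly_eval_general (p g : ℕ) :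
    (p % 12 = 1 → Gpoly p g = 1) ∧
    (p % 12 = 5 → Gpoly p g = X ^ ((g ^ 2 - g + 2) / 3)) ∧
    (p % 12 = 7 → Gpoly p g = (X - C 1728) ^ ((g ^ 2 - g) / 2)) ∧
    (p % 12 = 11 → Gpoly p g =
      X ^ ((g ^ 2 - g + 2) / 3) * (X - C 1728) ^ ((g ^ 2 - g) / 2)) := by
  refine ⟨fun hp => ?_, fun hp => ?_, fun hp => ?_, fun hp => ?_⟩ <;>
  · rw [Gpoly_eq_of_coprime g (by omega) (by omega)]
    simp [show p % 3 = p % 12 % 3 by omega, show p % 4 = p % 12 % 4 by omega, hp]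

theorem Gpoly_eval (p g : ℕ) (hp : p.Prime) (hp5 : 5 ≤ p) (hg : 2 ≤ g) :
    (p % 12 = 1 → Gpoly p g = 1) ∧
    (p % 12 = 5 → Gpoly p g = X ^ ((g ^ 2 - g + 2) / 3)) ∧
    (p % 12 = 7 → Gpoly p g = (X - C 1728) ^ ((g ^ 2 - g) / 2)) ∧
    (p % 12 = 11 → Gpoly p g =
      X ^ ((g ^ 2 - g + 2) / 3) * (X - C 1728) ^ ((g ^ 2 - g) / 2)) :=
  Gpoly_eval_general p g
end
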